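/- Let (X,d) be a compact metric space and f : X → X a continuous, open, distance-expanding and topologically exact map, and let φ : X → ℝ be continuous. Then for every z ∈ X the tree pressure P_tree(f,φ,z) = limsup_{n→∞} (1/n)·log Σ_{y ∈ (f^[n])⁻¹{z}} exp(S_nφ(y)) equals the topological pressure via separated sets P_sep(f,φ); in particular P_tree(f,φ,z) does not depend on z. -/

import Mathlib

/-!
Both pressures are exponential growth rates of partition functions. The fibre of `f^[n]` over `z`
is `(n, 2η)`-separated because `f` expands at scale `2η`, so the tree partition function is
bounded by the separated one at every scale `ε ≤ 2η`. Conversely, openness and exactness give a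
time `N` such that every orbit segment of length `n` is `r`-shadowed by a point of the fibre of
`f^[n + N]` over `z`; shadows of distinct points of an `(n, ε)`-separated set are distinct when
`2r ≤ ε`, and their Birkhoff sums differ by at most `n γ + N C`, where `C` bounds `|φ|` and `γ`
the oscillation of `φ` on `r`-balls. Hence the separated partition function at time `n` is at most
`e^{n γ + N C}` times the tree partition function at time `n + N`, and the two growth rates agree
for small `ε`.
-/

open Filter Metric Set Topology

noncomputable section

/-- `Y` is an `(n,ε)`-separated set for `f`. -/
def IsSepSet {X : Type*} [MetricSpace X] (f : X → X) (n : ℕ) (ε : ℝ) (Y : Finset X) : Prop :=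
  ∀ y₁ ∈ Y, ∀ y₂ ∈ Y, y₁ ≠ y₂ → ∃ j ≤ n, ε ≤ dist (f^[j] y₁) (f^[j] y₂)

/-- The Birkhoff sum `S_n φ`. -/
def birkhoff {X : Type*} (f : X → X) (φ : X → ℝ) (n : ℕ) (y : X) : ℝ :=
  ∑ j ∈ Finset.range n, φ (f^[j] y)

/-- The topological pressure via separated sets (the limit as `ε → 0⁺` exists by
monotonicity, so it is computed here as a `limsup` along `𝓝[>] 0`). -/
def sepPressure {X : Type*} [MetricSpace X] (f : X → X) (φ : X → ℝ) : ℝ :=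
  Filter.limsup (fun ε : ℝ =>
    Filter.limsup (fun n : ℕ => (1 / (n : ℝ)) * Real.log
      (sSup {s : ℝ | ∃ Y : Finset X, IsSepSet f n ε Y ∧
        s = ∑ y ∈ Y, Real.exp (birkhoff f φ n y)})) Filter.atTop)
    (𝓝[>] (0 : ℝ))

/-- The tree pressure `P_tree(f,φ,z)`. -/
def treePressure {X : Type*} [MetricSpace X] (f : X → X) (φ : X → ℝ) (z : X) : ℝ :=
  Filter.limsup (fun n : ℕ =>
    (1 / (n : ℝ)) * Real.log (∑' y : ((f^[n]) ⁻¹' {z} : Set X),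
      Real.exp (birkhoff f φ n y))) Filter.atTop

/-- `f` is distance expanding. -/
def DistExpanding {X : Type*} [MetricSpace X] (f : X → X) : Prop :=
  ∃ lam > 1, ∃ η > 0, ∀ x y : X, dist x y ≤ 2 * η → lam * dist x y ≤ dist (f x) (f y)

/-- `f` is topologically exact. -/
def TopExact {X : Type*} [TopologicalSpace X] (f : X → X) : Prop :=
  ∀ U : Set X, IsOpen U → U.Nonempty → ∃ n : ℕ, f^[n] '' U = Set.univ

open Real

open scoped Finset

theorem Function.Surjective.iterate_image_eq_univ_of_le {X : Type*} {f : X → X}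
    (hf : Function.Surjective f) {U : Set X} {m N : ℕ} (hm : f^[m] '' U = univ) (hmN : m ≤ N) :
    f^[N] '' U = univ := by
  rw [← Nat.sub_add_cancel hmN, Function.iterate_add, image_comp, hm, image_univ,
    (hf.iterate _).range_eq]

namespace IsSepSet

variable {X : Type*} [MetricSpace X] {f : X → X} {n : ℕ} {ε : ℝ} {Y : Finset X}

theorem empty : IsSepSet f n ε ∅ := by
  simp [IsSepSet]

theorem singleton (x : X) : IsSepSet f n ε {x} := by
  intro y₁ h₁ y₂ h₂ hne
  simp_all

theorem mono {ε' : ℝ} (hY : IsSepSet f n ε' Y) (h : ε ≤ ε') : IsSepSet f n ε Y :=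
  fun y₁ h₁ y₂ h₂ hne =>
    let ⟨j, hj, hd⟩ := hY y₁ h₁ y₂ h₂ hne
    ⟨j, hj, h.trans hd⟩

theorem eq_of_forall_dist_lt (hY : IsSepSet f n ε Y) {y₁ y₂ : X} (h₁ : y₁ ∈ Y) (h₂ : y₂ ∈ Y)
    (h : ∀ j ≤ n, dist (f^[j] y₁) (f^[j] y₂) < ε) : y₁ = y₂ := by
  by_contra hne
  obtain ⟨j, hj, hd⟩ := hY y₁ h₁ y₂ h₂ hne
  exact (h j hj).not_ge hd

theorem injOn_of_forall_dist_lt (hY : IsSepSet f n ε Y) {g : X → X}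
    (hg : ∀ y ∈ Y, ∀ j ≤ n, dist (f^[j] (g y)) (f^[j] y) < ε / 2) : InjOn g Y := by
  intro y₁ h₁ y₂ h₂ heq
  refine hY.eq_of_forall_dist_lt h₁ h₂ fun j hj => ?_
  have h₁' := hg y₁ h₁ j hj
  have h₂' := hg y₂ h₂ j hj
  rw [heq] at h₁'
  linarith [dist_triangle_left (f^[j] y₁) (f^[j] y₂) (f^[j] (g y₂))]

/-- Points of a separated set have distinct itineraries through a finite `ε/2`-net. -/
theorem exists_card_le_pow [CompactSpace X] (f : X → X) (hε : 0 < ε) :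
    ∃ K : ℕ, ∀ n (Y : Finset X), IsSepSet f n ε Y → #Y ≤ K ^ (n + 1) := by
  classical
  obtain ⟨F, -, hF⟩ := isCompact_univ.elim_nhds_subcover (fun x : X => ball x (ε / 2))
    fun x _ => ball_mem_nhds x (half_pos hε)
  have hnet : ∀ x : X, ∃ c ∈ F, dist x c < ε / 2 := fun x => by
    simpa using hF (mem_univ x)
  choose c hcF hc using hnet
  refine ⟨#F, fun n Y hY => ?_⟩
  calc #Y ≤ #(Fintype.piFinset fun _ : Fin (n + 1) => F) :=
        Finset.card_le_card_of_injOn (fun y j => c (f^[j] y))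
          (fun y _ => Fintype.mem_piFinset.2 fun j => hcF _)
          fun y₁ h₁ y₂ h₂ heq => hY.eq_of_forall_dist_lt h₁ h₂ fun j hj => by
            have hcj : c (f^[j] y₁) = c (f^[j] y₂) := congrFun heq ⟨j, Nat.lt_succ_of_le hj⟩
            have h₂' := hc (f^[j] y₂)
            rw [← hcj] at h₂'
            linarith [hc (f^[j] y₁), dist_triangle_right (f^[j] y₁) (f^[j] y₂) (c (f^[j] y₁))]
    _ = #F ^ (n + 1) := by simp

end IsSepSet

def DistExpandingWith {X : Type*} [MetricSpace X] (f : X → X) (lam η : ℝ) : Prop :=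
  ∀ x y : X, dist x y ≤ 2 * η → lam * dist x y ≤ dist (f x) (f y)

namespace DistExpandingWith

variable {X : Type*} [MetricSpace X] {f : X → X} {lam η : ℝ}

theorem pow_mul_dist_le_dist_iterate (hexp : DistExpandingWith f lam η) (hlam : 0 ≤ lam)
    {x y : X} : ∀ {n : ℕ}, (∀ j < n, dist (f^[j] x) (f^[j] y) ≤ 2 * η) →
      lam ^ n * dist x y ≤ dist (f^[n] x) (f^[n] y)
  | 0, _ => by simp
  | n + 1, h => by
    rw [Function.iterate_succ_apply', Function.iterate_succ_apply', pow_succ', mul_assoc]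
    exact (mul_le_mul_of_nonneg_left
      (pow_mul_dist_le_dist_iterate hexp hlam fun j hj => h j (by omega)) hlam).trans
      (hexp _ _ (h n n.lt_succ_self))

theorem isSepSet_of_forall_iterate_eq (hexp : DistExpandingWith f lam η) (hlam : 1 < lam)
    {n : ℕ} {z : X} {Y : Finset X} (hY : ∀ y ∈ Y, f^[n] y = z) : IsSepSet f n (2 * η) Y := by
  intro y₁ h₁ y₂ h₂ hne
  by_contra! hclose
  have h := hexp.pow_mul_dist_le_dist_iterate (by linarith) fun j hj => (hclose j hj.le).le
  rw [hY y₁ h₁, hY y₂ h₂, dist_self] at h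
  have hpow : 0 < lam ^ n := pow_pos (by linarith) n
  exact hne (dist_le_zero.1 (by nlinarith))

theorem finite_preimage_iterate [CompactSpace X] (hexp : DistExpandingWith f lam η)
    (hlam : 1 < lam) (hη : 0 < η) (n : ℕ) (z : X) : (f^[n] ⁻¹' {z}).Finite := by
  obtain ⟨K, hK⟩ := IsSepSet.exists_card_le_pow f (ε := 2 * η) (by positivity)
  by_contra hinf
  obtain ⟨Y, hYz, hYcard⟩ := Set.Infinite.exists_subset_card_eq hinf (K ^ (n + 1) + 1)
  have := hK n Y (hexp.isSepSet_of_forall_iterate_eq hlam fun y hy => hYz hy)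
  omega

/-- The inverse branches given by `hξ` contract by `lam⁻¹`, so pulling back along the orbit keeps
every error below `r`. -/
theorem exists_shadowing_preimage (hexp : DistExpandingWith f lam η) (hlam : 1 < lam)
    {ξ r : ℝ} (hξ : ∀ x, ball (f x) ξ ⊆ f '' ball x η) (hr : r ≤ ξ) :
    ∀ (n : ℕ) (y w : X), dist w (f^[n] y) < r →
      ∃ u, f^[n] u = w ∧ ∀ j ≤ n, dist (f^[j] u) (f^[j] y) < r
  | 0, y, w, hw => ⟨w, rfl, fun j hj => by simpa [Nat.le_zero.1 hj] using hw⟩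
  | n + 1, y, w, hw => by
    rw [Function.iterate_succ_apply'] at hw
    obtain ⟨v, hv, rfl⟩ := hξ _ (mem_ball.2 (hw.trans_le hr))
    have hvr : dist v (f^[n] y) < r := by
      have hv' := mem_ball.1 hv
      have := hexp v (f^[n] y) (by linarith [dist_nonneg (x := v) (y := f^[n] y)])
      nlinarith [dist_nonneg (x := v) (y := f^[n] y)]
    obtain ⟨u, rfl, hu⟩ := exists_shadowing_preimage hexp hlam hξ hr n y v hvr
    refine ⟨u, (Function.iterate_succ_apply' _ _ _), fun j hj => ?_⟩
    rcases hj.lt_or_eq with hj | rfl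
    · exact hu j (Nat.lt_succ_iff.1 hj)
    · rwa [Function.iterate_succ_apply', Function.iterate_succ_apply']

end DistExpandingWith

theorem IsOpenMap.exists_ball_subset_image_ball {X Y : Type*} [MetricSpace X] [CompactSpace X]
    [MetricSpace Y] {f : X → Y} (hf : Continuous f) (hopen : IsOpenMap f) {η : ℝ} (hη : 0 < η) :
    ∃ ξ > 0, ∀ x, ball (f x) ξ ⊆ f '' ball x η := by
  have hr : ∀ x, ∃ r > 0, ball (f x) r ⊆ f '' ball x (η / 2) := fun x =>
    Metric.isOpen_iff.1 (hopen _ isOpen_ball) _ (mem_image_of_mem f (mem_ball_self (half_pos hη)))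
  choose r hr0 hr using hr
  obtain ⟨F, -, hF⟩ := isCompact_univ.elim_nhds_subcover
    (fun x => ball x (η / 2) ∩ f ⁻¹' ball (f x) (r x / 2)) fun x _ =>
      inter_mem (ball_mem_nhds x (half_pos hη))
        (hf.continuousAt.preimage_mem_nhds (ball_mem_nhds _ (half_pos (hr0 x))))
  obtain ⟨ξ, hξ0, hξ⟩ : ∃ ξ > 0, ∀ i ∈ F, ξ < r i / 2 :=
    (eventually_mem_nhdsWithin.and ((eventually_all_finset F).2 fun i _ =>
      mem_of_superset (Ioo_mem_nhdsGT (half_pos (hr0 i))) fun _ h => h.2)).exists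
  refine ⟨ξ, hξ0, fun x w hw => ?_⟩
  obtain ⟨i, hxi, hiF, hfxi⟩ : ∃ i, dist x i < η / 2 ∧ i ∈ F ∧ dist (f x) (f i) < r i / 2 := by
    simpa using hF (mem_univ x)
  have hwi : w ∈ ball (f i) (r i) :=
    mem_ball.2 (by linarith [mem_ball.1 hw, hξ i hiF, dist_triangle w (f x) (f i)])
  obtain ⟨u, hu, rfl⟩ := hr i hwi
  exact mem_image_of_mem f
    (mem_ball.2 (by linarith [mem_ball.1 hu, dist_triangle u i x, dist_comm i x]))

namespace TopExact

variable {X : Type*} {f : X → X}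

theorem surjective [TopologicalSpace X] [T1Space X] (hexact : TopExact f) :
    Function.Surjective f := by
  intro y
  rcases subsingleton_or_nontrivial X with hX | hX
  · exact ⟨y, Subsingleton.elim _ _⟩
  · obtain ⟨x, hx⟩ := exists_ne y
    obtain ⟨n, hn⟩ := hexact {y}ᶜ isOpen_compl_singleton ⟨x, hx⟩
    obtain ⟨m, rfl⟩ : ∃ m, n = m + 1 := Nat.exists_eq_succ_of_ne_zero (by rintro rfl; simp at hn)
    obtain ⟨u, -, hu⟩ := hn.symm ▸ mem_univ y
    exact ⟨f^[m] u, by rwa [← Function.iterate_succ_apply' f m u]⟩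

theorem exists_iterate_image_ball_eq_univ [MetricSpace X] [CompactSpace X]
    (hexact : TopExact f) {r : ℝ} (hr : 0 < r) : ∃ N, ∀ x, f^[N] '' ball x r = univ := by
  choose N hN using fun x => hexact (ball x (r / 2)) isOpen_ball ⟨x, mem_ball_self (half_pos hr)⟩
  obtain ⟨F, -, hF⟩ := isCompact_univ.elim_nhds_subcover (fun x : X => ball x (r / 2))
    fun x _ => ball_mem_nhds x (half_pos hr)
  refine ⟨F.sup N, fun x => eq_univ_of_univ_subset ?_⟩
  obtain ⟨i, hiF, hxi⟩ : ∃ i ∈ F, x ∈ ball i (r / 2) := by simpa using hF (mem_univ x)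
  calc univ = f^[F.sup N] '' ball i (r / 2) :=
        (hexact.surjective.iterate_image_eq_univ_of_le (hN i) (Finset.le_sup hiF)).symm
    _ ⊆ f^[F.sup N] '' ball x r :=
        image_mono (ball_subset_ball' (by linarith [mem_ball'.1 hxi]))

end TopExact

theorem DistExpandingWith.exists_shadowing_in_fiber {X : Type*} [MetricSpace X] [CompactSpace X]
    {f : X → X} {lam η : ℝ} (hexp : DistExpandingWith f lam η) (hlam : 1 < lam) (hη : 0 < η)
    (hf : Continuous f) (hopen : IsOpenMap f) (hexact : TopExact f) (z : X) {r : ℝ} (hr : 0 < r) :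
    ∃ N : ℕ, ∀ (n : ℕ) (y : X), ∃ u, f^[n + N] u = z ∧ ∀ j ≤ n, dist (f^[j] u) (f^[j] y) < r := by
  obtain ⟨ξ, hξ, hξball⟩ := hopen.exists_ball_subset_image_ball hf hη
  obtain ⟨N, hN⟩ := hexact.exists_iterate_image_ball_eq_univ (lt_min hr hξ)
  refine ⟨N, fun n y => ?_⟩
  obtain ⟨w, hw, hwz⟩ := (hN (f^[n] y)).symm ▸ mem_univ z
  obtain ⟨u, rfl, hu⟩ := hexp.exists_shadowing_preimage hlam hξball (min_le_right r ξ) n y w hw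
  exact ⟨u, by rw [add_comm, Function.iterate_add_apply, hwz],
    fun j hj => (hu j hj).trans_le (min_le_left _ _)⟩

section Birkhoff

variable {X : Type*} {f : X → X} {φ : X → ℝ}

theorem birkhoff_add (m n : ℕ) (y : X) :
    birkhoff f φ (m + n) y = birkhoff f φ m y + birkhoff f φ n (f^[m] y) := by
  rw [birkhoff, Finset.sum_range_add]
  congr 1
  refine Finset.sum_congr rfl fun j _ => ?_
  rw [add_comm m j, Function.iterate_add_apply]

theorem abs_birkhoff_le {C : ℝ} (hC : ∀ x, |φ x| ≤ C) (n : ℕ) (y : X) :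
    |birkhoff f φ n y| ≤ n * C :=
  calc |birkhoff f φ n y| ≤ ∑ j ∈ Finset.range n, |φ (f^[j] y)| := Finset.abs_sum_le_sum_abs _ _
    _ ≤ n * C := by
      simpa using Finset.sum_le_card_nsmul (Finset.range n) _ _ fun j _ => hC (f^[j] y)

theorem abs_birkhoff_sub_le {γ : ℝ} {n : ℕ} {x y : X}
    (h : ∀ j < n, |φ (f^[j] x) - φ (f^[j] y)| ≤ γ) :
    |birkhoff f φ n x - birkhoff f φ n y| ≤ n * γ := by
  rw [birkhoff, birkhoff, ← Finset.sum_sub_distrib]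
  calc _ ≤ ∑ j ∈ Finset.range n, |φ (f^[j] x) - φ (f^[j] y)| := Finset.abs_sum_le_sum_abs _ _
    _ ≤ n * γ := by
      simpa using Finset.sum_le_card_nsmul (Finset.range n) _ _ fun j hj =>
        h j (Finset.mem_range.1 hj)

theorem birkhoff_le_birkhoff_add {C γ : ℝ} (hC : ∀ x, |φ x| ≤ C) {n N : ℕ} {u y : X}
    (h : ∀ j < n, |φ (f^[j] u) - φ (f^[j] y)| ≤ γ) :
    birkhoff f φ n y ≤ birkhoff f φ (n + N) u + (n * γ + N * C) := by
  rw [birkhoff_add]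
  linarith [(abs_le.1 (abs_birkhoff_sub_le h)).1,
    (abs_le.1 (abs_birkhoff_le (f := f) hC N (f^[n] u))).1]

theorem exp_neg_mul_le_exp_birkhoff {C : ℝ} (hC : ∀ x, |φ x| ≤ C) (n : ℕ) (y : X) :
    exp (-(C * (n + 1))) ≤ exp (birkhoff f φ n y) := by
  have hC0 : 0 ≤ C := (abs_nonneg _).trans (hC y)
  have := neg_le_of_abs_le (abs_birkhoff_le (f := f) hC n y)
  exact exp_le_exp.2 (by nlinarith)

theorem exp_birkhoff_le_exp_mul {C : ℝ} (hC : ∀ x, |φ x| ≤ C) (n : ℕ) (y : X) :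
    exp (birkhoff f φ n y) ≤ exp (C * (n + 1)) := by
  have hC0 : 0 ≤ C := (abs_nonneg _).trans (hC y)
  have := le_of_abs_le (abs_birkhoff_le (f := f) hC n y)
  exact exp_le_exp.2 (by nlinarith)

theorem sum_exp_birkhoff_le {C : ℝ} (hC : ∀ x, |φ x| ≤ C) {K n : ℕ} {Y : Finset X}
    (hY : #Y ≤ K ^ (n + 1)) :
    ∑ y ∈ Y, exp (birkhoff f φ n y) ≤ exp ((log (K + 1) + C) * (n + 1)) :=
  calc ∑ y ∈ Y, exp (birkhoff f φ n y) ≤ #Y • exp (C * (n + 1)) :=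
        Finset.sum_le_card_nsmul _ _ _ fun y _ => exp_birkhoff_le_exp_mul hC n y
    _ ≤ ((K : ℝ) + 1) ^ (n + 1) * exp (C * (n + 1)) := by
        rw [nsmul_eq_mul]
        gcongr
        exact_mod_cast hY.trans (Nat.pow_le_pow_left K.le_succ _)
    _ = exp ((log (K + 1) + C) * (n + 1)) := by
        rw [add_mul, exp_add, ← rpow_natCast, rpow_def_of_pos (by positivity)]
        push_cast
        ring_nf

end Birkhoff

/-- Equal to `0` at `n = 0`, where `1 / n = 0`. -/
def logRate (a : ℕ → ℝ) (n : ℕ) : ℝ :=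
  (1 / (n : ℝ)) * log (a n)

def growthRate (a : ℕ → ℝ) : ℝ :=
  limsup (logRate a) atTop

def ExpBounded (a : ℕ → ℝ) : Prop :=
  ∃ C, ∀ n : ℕ, exp (-(C * (n + 1))) ≤ a n ∧ a n ≤ exp (C * (n + 1))

namespace ExpBounded

variable {a b : ℕ → ℝ}

theorem of_bounds {C₁ C₂ : ℝ} (h₁ : ∀ n : ℕ, exp (-(C₁ * (n + 1))) ≤ a n)
    (h₂ : ∀ n : ℕ, a n ≤ exp (C₂ * (n + 1))) : ExpBounded a :=
  ⟨max C₁ C₂, fun n => ⟨(exp_le_exp.2 (by gcongr; exact le_max_left _ _)).trans (h₁ n),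
    (h₂ n).trans (exp_le_exp.2 (by gcongr; exact le_max_right _ _))⟩⟩

theorem pos (ha : ExpBounded a) (n : ℕ) : 0 < a n :=
  let ⟨_, hC⟩ := ha
  (exp_pos _).trans_le (hC n).1

theorem exists_abs_logRate_le (ha : ExpBounded a) : ∃ D, ∀ n ≥ 1, |logRate a n| ≤ D := by
  obtain ⟨C, hC⟩ := ha
  refine ⟨2 * C, fun n hn => ?_⟩
  have hpos : 0 < a n := (exp_pos _).trans_le (hC n).1
  have hlog : |log (a n)| ≤ C * (n + 1) :=
    abs_le.2 ⟨(le_log_iff_exp_le hpos).2 (hC n).1, (log_le_iff_le_exp hpos).2 (hC n).2⟩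
  have hn0 : (1 : ℝ) ≤ n := by exact_mod_cast hn
  have hC0 : 0 ≤ C := by nlinarith [abs_nonneg (log (a n))]
  rw [logRate, abs_mul, abs_of_pos (by positivity), one_div_mul_eq_div, div_le_iff₀ (by positivity)]
  nlinarith

theorem isBoundedUnder_le (ha : ExpBounded a) : IsBoundedUnder (· ≤ ·) atTop (logRate a) :=
  let ⟨_, hD⟩ := ha.exists_abs_logRate_le
  isBoundedUnder_of_eventually_le (eventually_atTop.2 ⟨1, fun n hn => le_of_abs_le (hD n hn)⟩)

theorem isBoundedUnder_ge (ha : ExpBounded a) : IsBoundedUnder (· ≥ ·) atTop (logRate a) :=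
  let ⟨_, hD⟩ := ha.exists_abs_logRate_le
  isBoundedUnder_of_eventually_ge (eventually_atTop.2 ⟨1, fun n hn => neg_le_of_abs_le (hD n hn)⟩)

end ExpBounded

theorem growthRate_mono {a b : ℕ → ℝ} (ha : ExpBounded a) (hb : ExpBounded b)
    (hab : ∀ n, a n ≤ b n) : growthRate a ≤ growthRate b :=
  limsup_le_limsup (Eventually.of_forall fun n =>
      mul_le_mul_of_nonneg_left (log_le_log (ha.pos n) (hab n)) (by positivity))
    ha.isBoundedUnder_ge.isCoboundedUnder_le hb.isBoundedUnder_le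

theorem logRate_le_of_le_shift {a b : ℕ → ℝ} {γ c D : ℝ} {N n : ℕ}
    (hD : ∀ m ≥ 1, |logRate a m| ≤ D) (hn : 1 ≤ n) (hb : 0 < b n)
    (h : b n ≤ exp (n * γ + c) * a (n + N)) :
    logRate b n ≤ γ + logRate a (n + N) + (c + N * D) / n := by
  have hn0 : (0 : ℝ) < n := by exact_mod_cast hn
  have ha : 0 < a (n + N) := pos_of_mul_pos_right (hb.trans_le h) (exp_pos _).le
  have hlog_a : log (a (n + N)) = (n + N) * logRate a (n + N) := by
    rw [logRate]
    push_cast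
    field_simp
  have hlog_b : log (b n) ≤ n * γ + c + (n + N) * logRate a (n + N) := by
    have := log_le_log hb h
    rwa [log_mul (exp_ne_zero _) ha.ne', log_exp, hlog_a] at this
  have hND : N * logRate a (n + N) ≤ N * D :=
    mul_le_mul_of_nonneg_left (le_of_abs_le (hD _ (by omega))) (Nat.cast_nonneg N)
  rw [logRate, one_div_mul_eq_div, div_le_iff₀ hn0, add_mul, add_mul, div_mul_cancel₀ _ hn0.ne']
  nlinarith

theorem growthRate_le_add_of_le_shift {a b : ℕ → ℝ} (ha : ExpBounded a) (hb : ExpBounded b)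
    {γ c : ℝ} {N : ℕ} (h : ∀ n : ℕ, b n ≤ exp (n * γ + c) * a (n + N)) :
    growthRate b ≤ growthRate a + γ := by
  obtain ⟨D, hD⟩ := ha.exists_abs_logRate_le
  refine le_of_forall_pos_le_add fun δ hδ =>
    limsup_le_of_le hb.isBoundedUnder_ge.isCoboundedUnder_le ?_
  have h₁ : ∀ᶠ n in atTop, logRate a (n + N) < growthRate a + δ / 2 :=
    (tendsto_add_atTop_nat N).eventually
      (eventually_lt_of_limsup_lt
        (show growthRate a < growthRate a + δ / 2 by linarith) ha.isBoundedUnder_le)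
  have h₂ : ∀ᶠ n : ℕ in atTop, (c + N * D) / n < δ / 2 :=
    (tendsto_const_div_atTop_nhds_zero_nat _).eventually_lt_const (half_pos hδ)
  filter_upwards [h₁, h₂, eventually_ge_atTop 1] with n h₁ h₂ hn
  linarith [logRate_le_of_le_shift hD hn (hb.pos n) (h n)]

section Partition

variable {X : Type*} (f : X → X) (φ : X → ℝ)

def treePartition (z : X) (n : ℕ) : ℝ :=
  ∑' y : ((f^[n]) ⁻¹' {z} : Set X), exp (birkhoff f φ n y)

theorem treePartition_eq_sum {z : X} {n : ℕ} {G : Finset X} (hG : (G : Set X) = f^[n] ⁻¹' {z}) :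
    treePartition f φ z n = ∑ y ∈ G, exp (birkhoff f φ n y) := by
  rw [treePartition, ← hG]
  exact Finset.tsum_subtype G fun y => exp (birkhoff f φ n y)

variable [MetricSpace X]

def sepPartition (ε : ℝ) (n : ℕ) : ℝ :=
  sSup {s : ℝ | ∃ Y : Finset X, IsSepSet f n ε Y ∧ s = ∑ y ∈ Y, exp (birkhoff f φ n y)}

theorem treePressure_eq_growthRate (z : X) :
    treePressure f φ z = growthRate (treePartition f φ z) :=
  rfl

theorem sepPressure_eq_limsup_growthRate :
    sepPressure f φ = limsup (fun ε => growthRate (sepPartition f φ ε)) (𝓝[>] (0 : ℝ)) :=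
  rfl

theorem sepPartition_le {ε b : ℝ} {n : ℕ}
    (h : ∀ Y, IsSepSet f n ε Y → ∑ y ∈ Y, exp (birkhoff f φ n y) ≤ b) :
    sepPartition f φ ε n ≤ b :=
  csSup_le ⟨0, ∅, IsSepSet.empty, by simp⟩ fun _ ⟨Y, hY, hs⟩ => hs ▸ h Y hY

variable [CompactSpace X] {f φ} {C : ℝ}

theorem sum_le_sepPartition (hC : ∀ x, |φ x| ≤ C) {ε : ℝ} (hε : 0 < ε) {n : ℕ} {Y : Finset X}
    (hY : IsSepSet f n ε Y) : ∑ y ∈ Y, exp (birkhoff f φ n y) ≤ sepPartition f φ ε n := by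
  obtain ⟨K, hK⟩ := IsSepSet.exists_card_le_pow f hε
  exact le_csSup ⟨_, fun _ ⟨Y', hY', hs⟩ => hs ▸ sum_exp_birkhoff_le hC (hK n Y' hY')⟩ ⟨Y, hY, rfl⟩

theorem expBounded_sepPartition [Nonempty X] (hC : ∀ x, |φ x| ≤ C) {ε : ℝ} (hε : 0 < ε) :
    ExpBounded (sepPartition f φ ε) := by
  obtain ⟨K, hK⟩ := IsSepSet.exists_card_le_pow f hε
  obtain ⟨x⟩ := ‹Nonempty X›
  refine .of_bounds (C₁ := C) (fun n => ?_)
    fun n => sepPartition_le f φ fun Y hY => sum_exp_birkhoff_le hC (hK n Y hY)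
  calc exp (-(C * (n + 1))) ≤ exp (birkhoff f φ n x) := exp_neg_mul_le_exp_birkhoff hC n x
    _ = ∑ y ∈ {x}, exp (birkhoff f φ n y) := (Finset.sum_singleton _ _).symm
    _ ≤ sepPartition f φ ε n := sum_le_sepPartition hC hε (IsSepSet.singleton x)

variable {lam η : ℝ}

theorem treePartition_le_sepPartition (hexp : DistExpandingWith f lam η) (hlam : 1 < lam)
    (hη : 0 < η) (hC : ∀ x, |φ x| ≤ C) {ε : ℝ} (hε : 0 < ε) (hεη : ε ≤ 2 * η) (z : X) (n : ℕ) :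
    treePartition f φ z n ≤ sepPartition f φ ε n := by
  have hfin := hexp.finite_preimage_iterate hlam hη n z
  rw [treePartition_eq_sum f φ hfin.coe_toFinset]
  exact sum_le_sepPartition hC hε
    ((hexp.isSepSet_of_forall_iterate_eq hlam fun y hy => hfin.mem_toFinset.1 hy).mono hεη)

theorem expBounded_treePartition (hexp : DistExpandingWith f lam η) (hlam : 1 < lam)
    (hη : 0 < η) (hsurj : Function.Surjective f) (hC : ∀ x, |φ x| ≤ C) (z : X) :
    ExpBounded (treePartition f φ z) := by
  have : Nonempty X := ⟨z⟩
  obtain ⟨D, hD⟩ := expBounded_sepPartition (f := f) hC (ε := 2 * η) (by positivity)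
  refine .of_bounds (C₁ := C) (fun n => ?_) fun n =>
    (treePartition_le_sepPartition hexp hlam hη hC (by positivity) le_rfl z n).trans (hD n).2
  have hfin := hexp.finite_preimage_iterate hlam hη n z
  obtain ⟨y, hy⟩ := hsurj.iterate n z
  rw [treePartition_eq_sum f φ hfin.coe_toFinset]
  exact (exp_neg_mul_le_exp_birkhoff hC n y).trans
    (Finset.single_le_sum (fun _ _ => (exp_pos _).le) (hfin.mem_toFinset.2 hy))

theorem exists_sepPartition_le_exp_mul_treePartition (hexp : DistExpandingWith f lam η)
    (hlam : 1 < lam) (hη : 0 < η) (hf : Continuous f) (hopen : IsOpenMap f)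
    (hexact : TopExact f) (hφ : Continuous φ) (hC : ∀ x, |φ x| ≤ C) (z : X) {ε γ : ℝ}
    (hε : 0 < ε) (hγ : 0 < γ) :
    ∃ N : ℕ, ∀ n, sepPartition f φ ε n ≤ exp (n * γ + N * C) * treePartition f φ z (n + N) := by
  classical
  obtain ⟨ρ, hρ, hφρ⟩ :=
    Metric.uniformContinuous_iff.1 (CompactSpace.uniformContinuous_of_continuous hφ) γ hγ
  obtain ⟨N, hshadow⟩ := hexp.exists_shadowing_in_fiber hlam hη hf hopen hexact z
    (r := min ρ (ε / 2)) (by positivity)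
  choose u hu hur using hshadow
  refine ⟨N, fun n => sepPartition_le f φ fun Y hY => ?_⟩
  have hfin := hexp.finite_preimage_iterate hlam hη (n + N) z
  rw [treePartition_eq_sum f φ hfin.coe_toFinset, Finset.mul_sum]
  calc ∑ y ∈ Y, exp (birkhoff f φ n y)
      ≤ ∑ y ∈ Y, exp (n * γ + N * C) * exp (birkhoff f φ (n + N) (u n y)) :=
        Finset.sum_le_sum fun y _ => by
          rw [← exp_add]
          refine exp_le_exp.2 ?_
          have hclose : ∀ j < n, |φ (f^[j] (u n y)) - φ (f^[j] y)| ≤ γ := fun j hj =>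
            (hφρ ((hur n y j hj.le).trans_le (min_le_left _ _))).le
          linarith [birkhoff_le_birkhoff_add (N := N) hC hclose]
    _ = ∑ x ∈ Y.image (u n), exp (n * γ + N * C) * exp (birkhoff f φ (n + N) x) :=
        (Finset.sum_image (f := fun x => exp (n * γ + N * C) * exp (birkhoff f φ (n + N) x))
          (hY.injOn_of_forall_dist_lt fun y _ j hj =>
          (hur n y j hj).trans_le (min_le_right _ _))).symm
    _ ≤ ∑ x ∈ hfin.toFinset, exp (n * γ + N * C) * exp (birkhoff f φ (n + N) x) :=
        Finset.sum_le_sum_of_subset_of_nonneg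
          (fun x hx => by
            obtain ⟨y, -, rfl⟩ := Finset.mem_image.1 hx
            exact hfin.mem_toFinset.2 (hu n y))
          fun _ _ _ => by positivity

theorem growthRate_sepPartition_eq_treePressure (hexp : DistExpandingWith f lam η)
    (hlam : 1 < lam) (hη : 0 < η) (hf : Continuous f) (hopen : IsOpenMap f)
    (hexact : TopExact f) (hφ : Continuous φ) (z : X) {ε : ℝ} (hε : 0 < ε) (hεη : ε ≤ 2 * η) :
    growthRate (sepPartition f φ ε) = treePressure f φ z := by
  have : Nonempty X := ⟨z⟩
  obtain ⟨C, hC⟩ := isCompact_univ.exists_bound_of_continuousOn hφ.continuousOn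
  replace hC : ∀ x, |φ x| ≤ C := fun x => by simpa using hC x (mem_univ x)
  have hsep := expBounded_sepPartition (f := f) hC hε
  have htree := expBounded_treePartition hexp hlam hη hexact.surjective hC z
  rw [treePressure_eq_growthRate]
  refine le_antisymm (le_of_forall_pos_le_add fun γ hγ => ?_)
    (growthRate_mono htree hsep (treePartition_le_sepPartition hexp hlam hη hC hε hεη z))
  obtain ⟨N, hN⟩ := exists_sepPartition_le_exp_mul_treePartition hexp hlam hη hf hopen hexact hφ
    hC z hε hγ
  exact growthRate_le_add_of_le_shift htree hsep hN

end Partition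

/-- for a continuous, open, distance-expanding and topologically exact map of
a compact metric space and a continuous potential `φ`, the tree pressure at any point `z`
equals the topological pressure via separated sets; in particular it does not depend
on `z`. -/
theorem treePressure_eq_sepPressure {X : Type*} [MetricSpace X] [CompactSpace X]
    (f : X → X) (hf : Continuous f) (hopen : IsOpenMap f) (hexp : DistExpanding f)
    (hexact : TopExact f) (φ : X → ℝ) (hφ : Continuous φ) (z : X) :
    treePressure f φ z = sepPressure f φ := by
  obtain ⟨lam, hlam, η, hη, hexp⟩ := hexp
  have hsmall : ∀ᶠ ε in 𝓝[>] (0 : ℝ), growthRate (sepPartition f φ ε) = treePressure f φ z :=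
    mem_of_superset (Ioo_mem_nhdsGT (by positivity : (0 : ℝ) < 2 * η)) fun ε hε =>
      growthRate_sepPartition_eq_treePressure hexp hlam hη hf hopen hexact hφ z hε.1 hε.2.le
  rw [sepPressure_eq_limsup_growthRate, limsup_congr hsmall, limsup_const]

end
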